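/- Fix strikes 0 < K_1 < … < K_N and a barrier U > 0. Let σ^* = (σ^*_1, σ^*_2) with σ^*_1, σ^*_2 > 0, let Σ^{σ^*} be the PCLVG implied volatility surface for σ^*, and suppose there is an index i with K_i < U such that the index j̄ = min{ j : K_j ≥ U + (U−K_i)·σ^*_2/σ^*_1 } is well defined. Let T > 0, let 0 < S ≤ U, and let Σ : {K_1,…,K_N} × (0,T] → (0,∞) satisfy the upper beliefs generated by Σ^{σ^*} on (0,T]. Then for every τ ∈ (0,T], P^bs(S, K_i, τ, Σ(K_i,τ)) − (K_i/U) · C^bs(S, K_{j̄}, τ, Σ(K_{j̄},τ)) > 0. -/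

import Mathlib

open MeasureTheory Filter Set

/-- Standard normal cumulative distribution function. -/
noncomputable def stdNormalCDF (x : ℝ) : ℝ :=
  (Real.sqrt (2 * Real.pi))⁻¹ * ∫ y in Set.Iic x, Real.exp (-(y ^ 2) / 2)

/-- Black–Scholes call price with zero interest and dividend rates. -/
noncomputable def bsCall (S K τ σ : ℝ) : ℝ :=
  let d1 := (Real.log (S / K) + σ ^ 2 * τ / 2) / (σ * Real.sqrt τ)
  S * stdNormalCDF d1 - K * stdNormalCDF (d1 - σ * Real.sqrt τ)

/-- Black–Scholes put price with zero interest and dividend rates. -/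
noncomputable def bsPut (S K τ σ : ℝ) : ℝ := bsCall S K τ σ - S + K

/-- The denominator appearing in the PCLVG call price formula. -/
noncomputable def pclvgD (σ1 σ2 U τ : ℝ) : ℝ :=
  1 / σ1 + 1 / σ2 - (1 / σ2 - 1 / σ1) * Real.exp (-2 * U / (σ1 * τ))

/-- The explicit PCLVG call price `C^σ(U,K,τ)`. -/
noncomputable def pclvgCall (σ1 σ2 U K τ : ℝ) : ℝ :=
  if K < U then
    (U - K) +
      τ * Real.exp (-(U - K) / (σ1 * τ)) * (1 - Real.exp (-2 * K / (σ1 * τ))) /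
        pclvgD σ1 σ2 U τ
  else
    τ * Real.exp (-(K - U) / (σ2 * τ)) * (1 - Real.exp (-2 * U / (σ1 * τ))) /
      pclvgD σ1 σ2 U τ

/-- The PCLVG put price `P^σ(U,K,τ) = C^σ(U,K,τ) − (U − K)`. -/
noncomputable def pclvgPut (σ1 σ2 U K τ : ℝ) : ℝ := pclvgCall σ1 σ2 U K τ - (U - K)

/-!
Black–Scholes prices increase with the volatility (the vega is `K φ(d₂) √τ ≥ 0`), calls
increase and puts decrease with the spot (the delta is `N(d₁) ∈ [0, 1]`), and
`C^bs(S,K,τ,cσ) = C^bs(S,K,c²τ,σ)`. With `S ≤ U` these turn the upper beliefs into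
`P^bs(S,K_i,τ,Σ) ≥ P^{σ*}(U,K_i,c²τ)` and `C^bs(S,K_j̄,τ,Σ) ≤ C^{σ*}(U,K_j̄,c²τ)`, so it
suffices that `(K_i/U) C^{σ*}(U,K_j̄,t) < P^{σ*}(U,K_i,t)`.
In the explicit PCLVG prices the choice of `j̄` makes the exponential factor of the call at most
that of the put, and what remains, `K_i (1 - e^{-2U/(σ₁t)}) < U (1 - e^{-2K_i/(σ₁t)})`, is
the strict decrease of `(1 - e^{-x})/x`, a secant slope of the strictly convex exponential.
-/

open ProbabilityTheory

lemma monotoneOn_of_hasDerivAt_nonneg {D : Set ℝ} (hD : Convex ℝ D) (hDo : IsOpen D)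
    {f f' : ℝ → ℝ} (hf : ∀ x ∈ D, HasDerivAt f (f' x) x) (hf' : ∀ x ∈ D, 0 ≤ f' x) :
    MonotoneOn f D :=
  monotoneOn_of_hasDerivWithinAt_nonneg hD (fun x hx ↦ (hf x hx).continuousAt.continuousWithinAt)
    (by simpa only [hDo.interior_eq] using fun x hx ↦ (hf x hx).hasDerivWithinAt)
    (by simpa only [hDo.interior_eq] using hf')

lemma antitoneOn_of_hasDerivAt_nonpos {D : Set ℝ} (hD : Convex ℝ D) (hDo : IsOpen D)
    {f f' : ℝ → ℝ} (hf : ∀ x ∈ D, HasDerivAt f (f' x) x) (hf' : ∀ x ∈ D, f' x ≤ 0) :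
    AntitoneOn f D :=
  antitoneOn_of_hasDerivWithinAt_nonpos hD (fun x hx ↦ (hf x hx).continuousAt.continuousWithinAt)
    (by simpa only [hDo.interior_eq] using fun x hx ↦ (hf x hx).hasDerivWithinAt)
    (by simpa only [hDo.interior_eq] using hf')

lemma stdNormalCDF_eq_integral_gaussianPDFReal (x : ℝ) :
    stdNormalCDF x = ∫ y in Iic x, gaussianPDFReal 0 1 y := by
  rw [stdNormalCDF, ← integral_const_mul]
  congr 1 with y
  simp [gaussianPDFReal]

lemma stdNormalCDF_nonneg (x : ℝ) : 0 ≤ stdNormalCDF x := by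
  rw [stdNormalCDF_eq_integral_gaussianPDFReal]
  exact setIntegral_nonneg measurableSet_Iic fun y _ ↦ gaussianPDFReal_nonneg 0 1 y

lemma stdNormalCDF_le_one (x : ℝ) : stdNormalCDF x ≤ 1 := by
  rw [stdNormalCDF_eq_integral_gaussianPDFReal, ← integral_gaussianPDFReal_eq_one 0 one_ne_zero]
  exact setIntegral_le_integral (integrable_gaussianPDFReal 0 1)
    (.of_forall fun y ↦ gaussianPDFReal_nonneg 0 1 y)

lemma hasDerivAt_stdNormalCDF (x : ℝ) : HasDerivAt stdNormalCDF (gaussianPDFReal 0 1 x) x := by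
  have hφ := integrable_gaussianPDFReal 0 1
  have hsplit : stdNormalCDF = fun z ↦
      (∫ y in Iic 0, gaussianPDFReal 0 1 y) + ∫ y in (0 : ℝ)..z, gaussianPDFReal 0 1 y := by
    ext z
    rw [stdNormalCDF_eq_integral_gaussianPDFReal,
      ← intervalIntegral.integral_Iic_sub_Iic hφ.integrableOn hφ.integrableOn]
    ring
  rw [hsplit]
  refine .const_add _ (intervalIntegral.integral_hasDerivAt_right hφ.intervalIntegrable
    hφ.aestronglyMeasurable.stronglyMeasurableAtFilter ?_)
  unfold gaussianPDFReal
  fun_prop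

noncomputable def bsD1 (S K τ σ : ℝ) : ℝ :=
  (Real.log (S / K) + σ ^ 2 * τ / 2) / (σ * Real.sqrt τ)

lemma mul_gaussianPDFReal_bsD1 {S K τ σ : ℝ} (hS : 0 < S) (hK : 0 < K) (hτ : 0 < τ)
    (hσ : σ ≠ 0) :
    S * gaussianPDFReal 0 1 (bsD1 S K τ σ) =
      K * gaussianPDFReal 0 1 (bsD1 S K τ σ - σ * Real.sqrt τ) := by
  have hsqrt : Real.sqrt τ ^ 2 = τ := Real.sq_sqrt hτ.le
  have hd1 : bsD1 S K τ σ * (σ * Real.sqrt τ) = Real.log (S / K) + σ ^ 2 * τ / 2 :=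
    div_mul_cancel₀ _ (mul_ne_zero hσ (Real.sqrt_pos.2 hτ).ne')
  have hexp : -(bsD1 S K τ σ - σ * Real.sqrt τ - 0) ^ 2 / (2 * ((1 : NNReal) : ℝ)) =
      Real.log (S / K) + -(bsD1 S K τ σ - 0) ^ 2 / (2 * ((1 : NNReal) : ℝ)) := by
    push_cast
    linear_combination hd1 - σ ^ 2 / 2 * hsqrt
  rw [gaussianPDFReal, gaussianPDFReal, hexp, Real.exp_add, Real.exp_log (div_pos hS hK)]
  field_simp

lemma hasDerivAt_bsCall_vol {S K τ σ : ℝ} (hS : 0 < S) (hK : 0 < K) (hτ : 0 < τ)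
    (hσ : σ ≠ 0) :
    HasDerivAt (bsCall S K τ)
      (K * gaussianPDFReal 0 1 (bsD1 S K τ σ - σ * Real.sqrt τ) * Real.sqrt τ) σ := by
  have hne : σ * Real.sqrt τ ≠ 0 := mul_ne_zero hσ (Real.sqrt_pos.2 hτ).ne'
  have hnum : HasDerivAt (fun x ↦ Real.log (S / K) + x ^ 2 * τ / 2) (σ * τ) σ :=
    ((((hasDerivAt_pow 2 σ).mul_const τ).div_const 2).const_add _).congr_deriv (by ring)
  have hden : HasDerivAt (fun x ↦ x * Real.sqrt τ) (Real.sqrt τ) σ := by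
    simpa using (hasDerivAt_id σ).mul_const (Real.sqrt τ)
  have hd1 := hnum.div hden hne
  have hcall := ((hasDerivAt_stdNormalCDF _).comp σ hd1).const_mul S |>.sub
    (((hasDerivAt_stdNormalCDF _).comp σ (hd1.sub hden)).const_mul K)
  refine hcall.congr_deriv ?_
  have := mul_gaussianPDFReal_bsD1 hS hK hτ hσ
  simp only [bsD1] at this ⊢
  linear_combination
    (σ * τ * (σ * Real.sqrt τ) - (Real.log (S / K) + σ ^ 2 * τ / 2) * Real.sqrt τ) /
      (σ * Real.sqrt τ) ^ 2 * this

lemma hasDerivAt_bsCall_spot {S K τ σ : ℝ} (hS : 0 < S) (hK : 0 < K) (hτ : 0 < τ)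
    (hσ : σ ≠ 0) :
    HasDerivAt (fun S ↦ bsCall S K τ σ) (stdNormalCDF (bsD1 S K τ σ)) S := by
  have hlog : HasDerivAt (fun x ↦ Real.log (x / K)) (1 / K / (S / K)) S :=
    ((hasDerivAt_id' S).div_const K).log (div_pos hS hK).ne'
  have hd1 := (hlog.add_const (σ ^ 2 * τ / 2)).div_const (σ * Real.sqrt τ)
  have hcall := ((hasDerivAt_id' S).mul ((hasDerivAt_stdNormalCDF _).comp S hd1)).sub
    (((hasDerivAt_stdNormalCDF _).comp S (hd1.sub_const (σ * Real.sqrt τ))).const_mul K)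
  refine hcall.congr_deriv ?_
  have := mul_gaussianPDFReal_bsD1 hS hK hτ hσ
  simp only [bsD1, Function.comp_apply] at this ⊢
  linear_combination 1 / K / (S / K) / (σ * Real.sqrt τ) * this

lemma bsCall_monotoneOn_vol {S K τ : ℝ} (hS : 0 < S) (hK : 0 < K) (hτ : 0 < τ) :
    MonotoneOn (bsCall S K τ) (Ioi 0) :=
  monotoneOn_of_hasDerivAt_nonneg (convex_Ioi 0) isOpen_Ioi
    (fun _ hσ ↦ hasDerivAt_bsCall_vol hS hK hτ (ne_of_gt hσ)) fun σ _ ↦ by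
      have := gaussianPDFReal_nonneg 0 1 (bsD1 S K τ σ - σ * Real.sqrt τ)
      positivity

lemma bsCall_monotoneOn_spot {K τ σ : ℝ} (hK : 0 < K) (hτ : 0 < τ) (hσ : σ ≠ 0) :
    MonotoneOn (fun S ↦ bsCall S K τ σ) (Ioi 0) :=
  monotoneOn_of_hasDerivAt_nonneg (convex_Ioi 0) isOpen_Ioi
    (fun _ hS ↦ hasDerivAt_bsCall_spot hS hK hτ hσ) fun _ _ ↦ stdNormalCDF_nonneg _

lemma bsPut_antitoneOn_spot {K τ σ : ℝ} (hK : 0 < K) (hτ : 0 < τ) (hσ : σ ≠ 0) :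
    AntitoneOn (fun S ↦ bsPut S K τ σ) (Ioi 0) :=
  antitoneOn_of_hasDerivAt_nonpos (convex_Ioi 0) isOpen_Ioi
    (fun S hS ↦ ((hasDerivAt_bsCall_spot hS hK hτ hσ).sub (hasDerivAt_id S)).add_const K)
    fun _ _ ↦ sub_nonpos.2 (stdNormalCDF_le_one _)

lemma bsCall_mul_vol {S K τ σ c : ℝ} (hc : 0 ≤ c) :
    bsCall S K τ (c * σ) = bsCall S K (c ^ 2 * τ) σ := by
  have h : Real.sqrt (c ^ 2 * τ) = c * Real.sqrt τ := by
    rw [Real.sqrt_mul (sq_nonneg c), Real.sqrt_sq hc]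
  simp only [bsCall, h]
  ring_nf

lemma bsPut_mul_vol {S K τ σ c : ℝ} (hc : 0 ≤ c) :
    bsPut S K τ (c * σ) = bsPut S K (c ^ 2 * τ) σ := by
  rw [bsPut, bsPut, bsCall_mul_vol hc]

lemma one_sub_exp_neg_div_lt_of_lt {x y : ℝ} (hx : 0 < x) (hxy : x < y) :
    (1 - Real.exp (-y)) / y < (1 - Real.exp (-x)) / x := by
  have h := strictConvexOn_exp.secant_strict_mono (mem_univ 0) (mem_univ (-y)) (mem_univ (-x))
    (by linarith) (by linarith) (neg_lt_neg hxy)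
  rwa [Real.exp_zero, sub_zero, sub_zero, ← neg_div_neg_eq, neg_neg, neg_sub,
    ← neg_div_neg_eq (Real.exp (-x) - 1), neg_neg, neg_sub] at h

lemma pclvgD_pos {σ1 σ2 U τ : ℝ} (h1 : 0 < σ1) (h2 : 0 < σ2) (hU : 0 < U) (hτ : 0 < τ) :
    0 < pclvgD σ1 σ2 U τ := by
  have hE : Real.exp (-2 * U / (σ1 * τ)) < 1 :=
    Real.exp_lt_one_iff.2 (div_neg_of_neg_of_pos (by linarith) (by positivity))
  have := Real.exp_pos (-2 * U / (σ1 * τ))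
  have : 0 < 1 / σ1 := by positivity
  have : 0 < 1 / σ2 := by positivity
  rw [pclvgD]
  nlinarith

lemma pclvgPut_of_lt {σ1 σ2 U K τ : ℝ} (h : K < U) :
    pclvgPut σ1 σ2 U K τ = τ * Real.exp (-(U - K) / (σ1 * τ)) *
      (1 - Real.exp (-2 * K / (σ1 * τ))) / pclvgD σ1 σ2 U τ := by
  rw [pclvgPut, pclvgCall, if_pos h]
  ring

lemma pclvgCall_of_le {σ1 σ2 U K τ : ℝ} (h : U ≤ K) :
    pclvgCall σ1 σ2 U K τ = τ * Real.exp (-(K - U) / (σ2 * τ)) *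
      (1 - Real.exp (-2 * U / (σ1 * τ))) / pclvgD σ1 σ2 U τ := by
  rw [pclvgCall, if_neg h.not_gt]

lemma div_mul_pclvgCall_lt_pclvgPut {σ1 σ2 U Ki Kj τ : ℝ} (h1 : 0 < σ1) (h2 : 0 < σ2)
    (hτ : 0 < τ) (hKi : 0 < Ki) (hKiU : Ki < U) (hKj : U + (U - Ki) * σ2 / σ1 ≤ Kj) :
    Ki / U * pclvgCall σ1 σ2 U Kj τ < pclvgPut σ1 σ2 U Ki τ := by
  have hU : 0 < U := hKi.trans hKiU
  have hKjU : U < Kj := by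
    have : 0 < (U - Ki) * σ2 / σ1 := by have := sub_pos.2 hKiU; positivity
    linarith
  have hexp : Real.exp (-(Kj - U) / (σ2 * τ)) ≤ Real.exp (-(U - Ki) / (σ1 * τ)) := by
    rw [Real.exp_le_exp, neg_div, neg_div, neg_le_neg_iff]
    calc (U - Ki) / (σ1 * τ) = (U - Ki) * σ2 / σ1 / (σ2 * τ) := by field_simp
      _ ≤ (Kj - U) / (σ2 * τ) := by gcongr; linarith
  have hslope :
      Ki / U * (1 - Real.exp (-2 * U / (σ1 * τ))) < 1 - Real.exp (-2 * Ki / (σ1 * τ)) := by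
    have hx : 0 < 2 * Ki / (σ1 * τ) := by positivity
    have hxy : 2 * Ki / (σ1 * τ) < 2 * U / (σ1 * τ) := by gcongr
    have hratio : Ki / U = 2 * Ki / (σ1 * τ) / (2 * U / (σ1 * τ)) := by field_simp
    set x := 2 * Ki / (σ1 * τ)
    set y := 2 * U / (σ1 * τ)
    rw [neg_mul, neg_div, neg_mul, neg_div, hratio]
    calc x / y * (1 - Real.exp (-y)) = x * ((1 - Real.exp (-y)) / y) := by ring
      _ < x * ((1 - Real.exp (-x)) / x) :=
        mul_lt_mul_of_pos_left (one_sub_exp_neg_div_lt_of_lt hx hxy) hx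
      _ = 1 - Real.exp (-x) := by field_simp
  have hB : 0 ≤ 1 - Real.exp (-2 * U / (σ1 * τ)) := by
    rw [sub_nonneg, Real.exp_le_one_iff]
    exact div_nonpos_of_nonpos_of_nonneg (by linarith) (by positivity)
  rw [pclvgPut_of_lt hKiU, pclvgCall_of_le hKjU.le, ← mul_div_assoc]
  gcongr ?_ / pclvgD σ1 σ2 U τ
  · exact pclvgD_pos h1 h2 hU hτ
  calc Ki / U * (τ * Real.exp (-(Kj - U) / (σ2 * τ)) * (1 - Real.exp (-2 * U / (σ1 * τ))))
      ≤ τ * Real.exp (-(U - Ki) / (σ1 * τ)) *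
          (Ki / U * (1 - Real.exp (-2 * U / (σ1 * τ)))) := by
        rw [mul_left_comm]; gcongr
    _ < τ * Real.exp (-(U - Ki) / (σ1 * τ)) * (1 - Real.exp (-2 * Ki / (σ1 * τ))) := by
        gcongr

lemma bsPut_le_bsPut_of_scaled {S U K τ σ v c : ℝ} (hS : 0 < S) (hSU : S ≤ U) (hK : 0 < K)
    (hτ : 0 < τ) (hc : 0 < c) (hv : 0 < v) (hσ : c * v ≤ σ) :
    bsPut U K (c ^ 2 * τ) v ≤ bsPut S K τ σ := by
  have hvol : bsCall S K τ (c * v) ≤ bsCall S K τ σ :=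
    bsCall_monotoneOn_vol hS hK hτ (mul_pos hc hv) ((mul_pos hc hv).trans_le hσ) hσ
  calc bsPut U K (c ^ 2 * τ) v
      ≤ bsPut S K (c ^ 2 * τ) v :=
        bsPut_antitoneOn_spot hK (by positivity) hv.ne' hS (hS.trans_le hSU) hSU
    _ = bsPut S K τ (c * v) := (bsPut_mul_vol hc.le).symm
    _ ≤ bsPut S K τ σ := by rw [bsPut, bsPut]; linarith

lemma bsCall_le_bsCall_of_scaled {S U K τ σ v c : ℝ} (hS : 0 < S) (hSU : S ≤ U) (hK : 0 < K)
    (hτ : 0 < τ) (hc : 0 < c) (hv : 0 < v) (hσ₀ : 0 < σ) (hσ : σ ≤ c * v) :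
    bsCall S K τ σ ≤ bsCall U K (c ^ 2 * τ) v :=
  calc bsCall S K τ σ
      ≤ bsCall S K τ (c * v) := bsCall_monotoneOn_vol hS hK hτ hσ₀ (mul_pos hc hv) hσ
    _ = bsCall S K (c ^ 2 * τ) v := bsCall_mul_vol hc.le
    _ ≤ bsCall U K (c ^ 2 * τ) v :=
        bsCall_monotoneOn_spot hK (by positivity) hv.ne' hS (hS.trans_le hSU) hSU

theorem rtis_second_portfolio_positive_general (n : ℕ) (K : Fin n → ℝ)
    (hKpos : ∀ j, 0 < K j)
    (U : ℝ)
    (σs1 σs2 : ℝ) (h1 : 0 < σs1) (h2 : 0 < σs2)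
    (IVstar : ℝ → ℝ → ℝ)
    (hIVstar : ∀ K' τ : ℝ, 0 < K' → 0 < τ → 0 < IVstar K' τ ∧
      bsCall U K' τ (IVstar K' τ) = pclvgCall σs1 σs2 U K' τ)
    (i jbar : Fin n) (hi : K i < U)
    (hjbar1 : U + (U - K i) * σs2 / σs1 ≤ K jbar)
    (T : ℝ) (S : ℝ) (hS0 : 0 < S) (hSU : S ≤ U)
    (IV : Fin n → ℝ → ℝ) (hIVpos : ∀ j τ, 0 < τ → τ ≤ T → 0 < IV j τ)
    (hbeliefs : ∃ c : ℝ, 0 < c ∧ ∀ τ : ℝ, 0 < τ → τ ≤ T →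
      (∀ i', K i' < U → c * IVstar (K i') (c ^ 2 * τ) ≤ IV i' τ) ∧
      (∀ j, U < K j → IV j τ ≤ c * IVstar (K j) (c ^ 2 * τ))) :
    ∀ τ : ℝ, 0 < τ → τ ≤ T →
      0 < bsPut S (K i) τ (IV i τ) - K i / U * bsCall S (K jbar) τ (IV jbar τ) := by
  intro τ hτ hτT
  obtain ⟨c, hc, hbel⟩ := hbeliefs
  obtain ⟨hlow, hhigh⟩ := hbel τ hτ hτT
  have hcτ : 0 < c ^ 2 * τ := by positivity
  have hjU : U < K jbar := by
    have : 0 < (U - K i) * σs2 / σs1 := by have := sub_pos.2 hi; positivity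
    linarith
  obtain ⟨hv, hput⟩ := hIVstar (K i) (c ^ 2 * τ) (hKpos i) hcτ
  obtain ⟨hw, hcall⟩ := hIVstar (K jbar) (c ^ 2 * τ) (hKpos jbar) hcτ
  have hP : pclvgPut σs1 σs2 U (K i) (c ^ 2 * τ) ≤ bsPut S (K i) τ (IV i τ) := by
    have := bsPut_le_bsPut_of_scaled hS0 hSU (hKpos i) hτ hc hv (hlow i hi)
    rw [bsPut, hput] at this
    rw [pclvgPut]
    linarith
  have hC : bsCall S (K jbar) τ (IV jbar τ) ≤ pclvgCall σs1 σs2 U (K jbar) (c ^ 2 * τ) :=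
    hcall ▸ bsCall_le_bsCall_of_scaled hS0 hSU (hKpos jbar) hτ hc hw (hIVpos jbar τ hτ hτT)
      (hhigh jbar hjU)
  have hportfolio := div_mul_pclvgCall_lt_pclvgPut h1 h2 hcτ (hKpos i) hi hjbar1
  have := mul_le_mul_of_nonneg_left hC (div_nonneg (hKpos i).le ((hKpos i).trans hi).le)
  linarith

/-- Positivity of the second RTIS portfolio: under upper beliefs generated by
a PCLVG dominating surface, with the spot at or below the barrier, the portfolio long a put
struck at `K_i` and short `K_i/U` calls struck at `K_{j̄}` has a strictly positive price. -/
theorem rtis_second_portfolio_positive (n : ℕ) (K : Fin n → ℝ)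
    (hKpos : ∀ j, 0 < K j) (hKmono : StrictMono K)
    (U : ℝ) (hU : 0 < U)
    (σs1 σs2 : ℝ) (h1 : 0 < σs1) (h2 : 0 < σs2)
    (IVstar : ℝ → ℝ → ℝ)
    (hIVstar : ∀ K' τ : ℝ, 0 < K' → 0 < τ → 0 < IVstar K' τ ∧
      bsCall U K' τ (IVstar K' τ) = pclvgCall σs1 σs2 U K' τ)
    (i jbar : Fin n) (hi : K i < U)
    (hjbar1 : U + (U - K i) * σs2 / σs1 ≤ K jbar)
    (hjbar2 : ∀ j, U + (U - K i) * σs2 / σs1 ≤ K j → K jbar ≤ K j)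
    (T : ℝ) (hT : 0 < T) (S : ℝ) (hS0 : 0 < S) (hSU : S ≤ U)
    (IV : Fin n → ℝ → ℝ) (hIVpos : ∀ j τ, 0 < τ → τ ≤ T → 0 < IV j τ)
    (hbeliefs : ∃ c : ℝ, 0 < c ∧ ∀ τ : ℝ, 0 < τ → τ ≤ T →
      (∀ i', K i' < U → c * IVstar (K i') (c ^ 2 * τ) ≤ IV i' τ) ∧
      (∀ j, U < K j → IV j τ ≤ c * IVstar (K j) (c ^ 2 * τ))) :
    ∀ τ : ℝ, 0 < τ → τ ≤ T →
      0 < bsPut S (K i) τ (IV i τ) - K i / U * bsCall S (K jbar) τ (IV jbar τ) :=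
  rtis_second_portfolio_positive_general n K hKpos U σs1 σs2 h1 h2 IVstar hIVstar i jbar hi hjbar1 T
    S hS0 hSU IV hIVpos hbeliefs
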